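/- Let d be an odd prime and ε = 2π/d. Let q ∈ {1,...,d-1}, m, m' ∈ {0,...,d-1}, and β, β' ∈ ℂ. The vectors v = N·(1/√d)∑_{j=0}^{d-1} e^{iχ_j}|jq⟩⊗(|+⟩ + β e^{2iqεj}|−⟩) with χ_j = −(qε/2)j² + (mε+qπ)j and N = 1/√(1+|β|²), and w = N'·|m'⟩⊗(|+⟩ + β'|−⟩) with N' = 1/√(1+|β'|²), satisfy |⟨w|v⟩| ≤ 1/√d. -/

import Mathlib

/-! The eigenvector `v` is `(1/√d) ∑_j e^{iχ_j} v_j` with unit product vectors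
`v_j = N |jq⟩ ⊗ (|+⟩ + β e^{2iqεj}|−⟩)`, and `w` is a unit product vector of the same shape.
The momentum states `|k⟩` are orthonormal modulo `d`, so `⟨w|v_j⟩ = 0` unless `jq ≡ m' (mod d)`.
As `q` is invertible modulo the prime `d`, at most one `j` survives, and Cauchy–Schwarz bounds
its term by `1/√d`. -/

open Real

/-- The quantum-walk eigenvector
`v = N (1/√d) ∑_j e^{iχ_j} |jq⟩ ⊗ (|+⟩ + β e^{2iqεj}|−⟩)` in `ℂ^d ⊗ ℂ²`,
with `χ_j = −(qε/2)j² + (mε+qπ)j`, `N = 1/√(1+|β|²)`, `ε = 2π/d`, and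
`|k⟩ = (1/√d) ∑_x e^{ikεx}|x⟩`. -/
noncomputable def qwGenEigvec (d q m : ℕ) (β : ℂ) : EuclideanSpace ℂ (Fin d × Fin 2) :=
  WithLp.toLp 2 fun p =>
    ((1 / Real.sqrt (1 + ‖β‖ ^ 2) : ℝ) : ℂ) * (1 / Real.sqrt d : ℝ) *
      ∑ j ∈ Finset.range d,
        Complex.exp (Complex.I *
            ((-((q : ℝ) * (2 * Real.pi / d) / 2) * (j : ℝ) ^ 2
              + ((m : ℝ) * (2 * Real.pi / d) + (q : ℝ) * Real.pi) * (j : ℝ)))) *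
          ((1 / Real.sqrt d : ℝ) *
            Complex.exp (Complex.I * ((j * q : ℕ) : ℝ) * (2 * Real.pi / d) * ((p.1 : ℕ) : ℝ))) *
          (if p.2 = 0 then 1
            else β * Complex.exp (2 * Complex.I * q * (2 * Real.pi / d) * (j : ℝ)))

/-- The `q' = 0` eigenvector `w = N' |m'⟩ ⊗ (|+⟩ + β'|−⟩)`. -/
noncomputable def qwZeroEigvec (d m' : ℕ) (β' : ℂ) : EuclideanSpace ℂ (Fin d × Fin 2) :=
  WithLp.toLp 2 fun p =>
    ((1 / Real.sqrt (1 + ‖β'‖ ^ 2) : ℝ) : ℂ) *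
      ((1 / Real.sqrt d : ℝ) *
        Complex.exp (Complex.I * (m' : ℝ) * (2 * Real.pi / d) * ((p.1 : ℕ) : ℝ))) *
      (if p.2 = 0 then 1 else β')

section TensorVec

variable {ι κ : Type*} [Fintype ι] [Fintype κ]

noncomputable def tensorVec (u : EuclideanSpace ℂ ι) (v : EuclideanSpace ℂ κ) :
    EuclideanSpace ℂ (ι × κ) :=
  WithLp.toLp 2 fun p => u p.1 * v p.2

theorem inner_tensorVec (u u' : EuclideanSpace ℂ ι) (v v' : EuclideanSpace ℂ κ) :
    inner ℂ (tensorVec u v) (tensorVec u' v') = inner ℂ u u' * inner ℂ v v' := by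
  simp only [PiLp.inner_apply, tensorVec, Fintype.sum_prod_type, Finset.sum_mul_sum,
    RCLike.inner_apply, map_mul]
  refine Finset.sum_congr rfl fun i _ => Finset.sum_congr rfl fun k _ => ?_
  ring

theorem norm_tensorVec (u : EuclideanSpace ℂ ι) (v : EuclideanSpace ℂ κ) :
    ‖tensorVec u v‖ = ‖u‖ * ‖v‖ := by
  have h := inner_tensorVec u u v v
  simp only [inner_self_eq_norm_sq_to_K] at h
  have h2 : ‖tensorVec u v‖ ^ 2 = (‖u‖ * ‖v‖) ^ 2 := by
    rw [mul_pow]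
    exact_mod_cast h
  exact (pow_left_inj₀ (norm_nonneg _) (by positivity) two_ne_zero).1 h2

end TensorVec

theorem IsPrimitiveRoot.geom_sum_zpow {K : Type*} [Field K] {ζ : K} {d : ℕ}
    (hζ : IsPrimitiveRoot ζ d) (k : ℤ) :
    ∑ x ∈ Finset.range d, (ζ ^ k) ^ x = if (d : ℤ) ∣ k then (d : K) else 0 := by
  split_ifs with hk
  · simp [(hζ.zpow_eq_one_iff_dvd k).2 hk]
  · have hζk : ζ ^ k ≠ 1 := mt (hζ.zpow_eq_one_iff_dvd k).1 hk
    have hpow : (ζ ^ k) ^ d = 1 := by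
      rw [← zpow_natCast, ← zpow_mul, mul_comm, zpow_mul, zpow_natCast, hζ.pow_eq_one, one_zpow]
    rw [geom_sum_eq hζk, hpow, sub_self, zero_div]

theorem eq_of_dvd_mul_sub_of_coprime {d q i j : ℕ} (hdq : d.Coprime q) (hi : i < d) (hj : j < d)
    {r : ℤ} (hir : (d : ℤ) ∣ i * q - r) (hjr : (d : ℤ) ∣ j * q - r) : i = j := by
  have hdvd : (d : ℤ) ∣ (i - j : ℤ) * q := by
    rw [show ((i : ℤ) - j) * q = (i * q - r) - (j * q - r) by ring]
    exact dvd_sub hir hjr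
  have := Int.eq_zero_of_dvd_of_natAbs_lt_natAbs
    ((Nat.isCoprime_iff_coprime.2 hdq).dvd_of_dvd_mul_right hdvd) (by omega)
  omega

theorem norm_sum_le_of_subsingleton_support {ι E : Type*} [SeminormedAddCommGroup E]
    {s : Finset ι} {f : ι → E} {C : ℝ} (hC : 0 ≤ C) (hf : ∀ j ∈ s, ‖f j‖ ≤ C)
    (hsupp : ∀ i ∈ s, ∀ j ∈ s, f i ≠ 0 → f j ≠ 0 → i = j) : ‖∑ j ∈ s, f j‖ ≤ C := by
  by_cases h : ∃ i ∈ s, f i ≠ 0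
  · obtain ⟨i, hi, hfi⟩ := h
    rw [Finset.sum_eq_single_of_mem i hi fun j hj hji =>
      by_contra fun hfj => hji (hsupp j hj i hi hfj hfi)]
    exact hf i hi
  · push Not at h
    rw [Finset.sum_eq_zero h, norm_zero]
    exact hC

noncomputable def fourierVec (d k : ℕ) : EuclideanSpace ℂ (Fin d) :=
  WithLp.toLp 2 fun x =>
    (1 / Real.sqrt d : ℝ) * Complex.exp (Complex.I * (k : ℝ) * (2 * Real.pi / d) * ((x : ℕ) : ℝ))

theorem inner_fourierVec {d : ℕ} (hd : d ≠ 0) (k k' : ℕ) :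
    inner ℂ (fourierVec d k) (fourierVec d k') = if (d : ℤ) ∣ (k' - k : ℤ) then 1 else 0 := by
  set ζ := Complex.exp (2 * Real.pi * Complex.I / d)
  have hterm : ∀ x : ℕ,
      (starRingEnd ℂ) (Complex.exp (Complex.I * (k : ℝ) * (2 * Real.pi / d) * (x : ℝ)))
        * Complex.exp (Complex.I * (k' : ℝ) * (2 * Real.pi / d) * (x : ℝ)) = (ζ ^ (k' - k : ℤ)) ^ x := by
    intro x
    rw [← Complex.exp_conj, ← Complex.exp_add, ← zpow_natCast, ← zpow_mul, ← Complex.exp_int_mul]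
    congr 1
    simp only [Complex.ofReal_natCast, map_mul, Complex.conj_I, map_natCast, neg_mul, map_div₀,
      map_ofNat, Complex.conj_ofReal, Int.cast_mul, Int.cast_sub, Int.cast_natCast]
    ring
  have hscale : ((1 / Real.sqrt d : ℝ) : ℂ) ^ 2 * d = 1 := by
    have hd' : (0 : ℝ) < d := by positivity
    rw [← Complex.ofReal_pow, div_pow, Real.sq_sqrt hd'.le]
    push_cast
    field_simp
  calc inner ℂ (fourierVec d k) (fourierVec d k')
      = ((1 / Real.sqrt d : ℝ) : ℂ) ^ 2 * ∑ x ∈ Finset.range d, (ζ ^ (k' - k : ℤ)) ^ x := by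
        rw [PiLp.inner_apply, Finset.mul_sum, ← Fin.sum_univ_eq_sum_range]
        refine Finset.sum_congr rfl fun x _ => ?_
        rw [← hterm]
        simp only [fourierVec, PiLp.toLp_apply, RCLike.inner_apply, map_mul, Complex.conj_ofReal]
        ring
    _ = _ := by
        rw [(Complex.isPrimitiveRoot_exp d hd).geom_sum_zpow]
        split_ifs
        · exact hscale
        · exact mul_zero _

theorem norm_fourierVec {d : ℕ} (hd : d ≠ 0) (k : ℕ) : ‖fourierVec d k‖ = 1 := by
  have h := inner_fourierVec hd k k
  rw [sub_self, if_pos (dvd_zero _)] at h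
  have h2 : ‖fourierVec d k‖ ^ 2 = 1 := by
    rw [@norm_sq_eq_re_inner ℂ, h, RCLike.one_re]
  exact (pow_eq_one_iff_of_nonneg (norm_nonneg _) two_ne_zero).1 h2

noncomputable def spinor (b : ℂ) : EuclideanSpace ℂ (Fin 2) :=
  WithLp.toLp 2 fun s => if s = 0 then 1 else b

theorem norm_spinor (b : ℂ) : ‖spinor b‖ = Real.sqrt (1 + ‖b‖ ^ 2) := by
  simp [EuclideanSpace.norm_eq, spinor, Fin.sum_univ_two]

noncomputable def qwBasisVec (d k : ℕ) (b : ℂ) : EuclideanSpace ℂ (Fin d × Fin 2) :=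
  ((1 / Real.sqrt (1 + ‖b‖ ^ 2) : ℝ) : ℂ) • tensorVec (fourierVec d k) (spinor b)

theorem norm_qwBasisVec {d : ℕ} (hd : d ≠ 0) (k : ℕ) (b : ℂ) : ‖qwBasisVec d k b‖ = 1 := by
  rw [qwBasisVec, norm_smul, norm_tensorVec, norm_fourierVec hd, norm_spinor, Complex.norm_real,
    Real.norm_of_nonneg (by positivity)]
  field_simp

theorem inner_qwBasisVec_eq_zero {d : ℕ} (hd : d ≠ 0) {k k' : ℕ} (b b' : ℂ)
    (hkk' : ¬ (d : ℤ) ∣ (k' - k : ℤ)) : inner ℂ (qwBasisVec d k b) (qwBasisVec d k' b') = 0 := by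
  simp [qwBasisVec, inner_tensorVec, inner_fourierVec hd, hkk']

theorem qwZeroEigvec_eq (d m' : ℕ) (β' : ℂ) : qwZeroEigvec d m' β' = qwBasisVec d m' β' := by
  ext p
  simp only [qwZeroEigvec, qwBasisVec, tensorVec, fourierVec, spinor, PiLp.toLp_apply,
    PiLp.smul_apply, smul_eq_mul]
  ring

noncomputable def qwChi (d q m j : ℕ) : ℝ :=
  -((q : ℝ) * (2 * Real.pi / d) / 2) * (j : ℝ) ^ 2
    + ((m : ℝ) * (2 * Real.pi / d) + (q : ℝ) * Real.pi) * (j : ℝ)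

theorem qwGenEigvec_eq (d q m : ℕ) (β : ℂ) :
    qwGenEigvec d q m β = ((1 / Real.sqrt d : ℝ) : ℂ) •
      ∑ j ∈ Finset.range d, Complex.exp (Complex.I * qwChi d q m j) •
        qwBasisVec d (j * q) (β * Complex.exp (2 * Complex.I * q * (2 * Real.pi / d) * (j : ℝ))) := by
  have hnorm : ∀ j : ℕ,
      ‖β * Complex.exp (2 * Complex.I * q * (2 * Real.pi / d) * (j : ℝ))‖ = ‖β‖ := fun j => by
    rw [norm_mul, Complex.norm_exp]
    simp
  ext p
  simp only [qwGenEigvec, qwBasisVec, tensorVec, fourierVec, spinor, hnorm, PiLp.toLp_apply,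
    PiLp.smul_apply, WithLp.ofLp_sum, Finset.sum_apply, smul_eq_mul, Finset.mul_sum]
  refine Finset.sum_congr rfl fun j _ => ?_
  push_cast [qwChi]
  ring

theorem qw_eigvec_overlap_bound_q_zero_general (d : ℕ) (hd : d.Prime)
    (q m m' : ℕ) (hq1 : 1 ≤ q) (hq : q < d)
    (β β' : ℂ) :
    ‖(inner ℂ (qwZeroEigvec d m' β') (qwGenEigvec d q m β) : ℂ)‖
      ≤ 1 / Real.sqrt d := by
  have hd0 : d ≠ 0 := hd.ne_zero
  have hdq : d.Coprime q := hd.coprime_iff_not_dvd.2 (Nat.not_dvd_of_pos_of_lt hq1 hq)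
  set u : ℕ → EuclideanSpace ℂ (Fin d × Fin 2) := fun j =>
    qwBasisVec d (j * q) (β * Complex.exp (2 * Complex.I * q * (2 * Real.pi / d) * (j : ℝ)))
  have hdvd : ∀ j, inner ℂ (qwBasisVec d m' β') (u j) ≠ 0 → (d : ℤ) ∣ j * q - m' :=
    fun j h => by_contra fun hj => h (inner_qwBasisVec_eq_zero hd0 _ _ (by push_cast; exact hj))
  rw [qwZeroEigvec_eq, qwGenEigvec_eq, inner_smul_right, inner_sum, norm_mul, Complex.norm_real,
    Real.norm_of_nonneg (by positivity)]
  refine mul_le_of_le_one_right (by positivity)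
    (norm_sum_le_of_subsingleton_support zero_le_one (fun j _ => ?_) fun i hi j hj hi0 hj0 => ?_)
  · rw [inner_smul_right, norm_mul, Complex.norm_exp_I_mul_ofReal, one_mul]
    exact (norm_inner_le_norm _ _).trans_eq
      (by rw [norm_qwBasisVec hd0, norm_qwBasisVec hd0, one_mul])
  · rw [inner_smul_right] at hi0 hj0
    exact eq_of_dvd_mul_sub_of_coprime hdq (Finset.mem_range.1 hi) (Finset.mem_range.1 hj)
      (hdvd i (right_ne_zero_of_mul hi0)) (hdvd j (right_ne_zero_of_mul hj0))

theorem qw_eigvec_overlap_bound_q_zero (d : ℕ) (hd : d.Prime) (hodd : Odd d)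
    (q m m' : ℕ) (hq1 : 1 ≤ q) (hq : q < d) (hm : m < d) (hm' : m' < d)
    (β β' : ℂ) :
    ‖(inner ℂ (qwZeroEigvec d m' β') (qwGenEigvec d q m β) : ℂ)‖
      ≤ 1 / Real.sqrt d :=
  qw_eigvec_overlap_bound_q_zero_general d hd q m m' hq1 hq β β'
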